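/- Let n ≥ 1, let a, b, c, d ∈ (−1,1) and q ∈ (−1,1) with q ≠ 0. Suppose π > ξ_1 > ξ_2 > … > ξ_n > 0 are real numbers such that, with p : ℂ → ℂ defined by p(z) = ∏_{j=1}^n (z − cos ξ_j), the q-difference equation A(ξ)·( p((q e^{iξ} + q^{−1}e^{−iξ})/2) − p(cos ξ) ) + A(−ξ)·( p((q e^{−iξ} + q^{−1}e^{iξ})/2) − p(cos ξ) ) = E_n · p(cos ξ) holds for every real ξ with e^{2iξ} ≠ 1, where A(ξ) = (1−a e^{iξ})(1−b e^{iξ})(1−c e^{iξ})(1−d e^{iξ}) / ((1−e^{2iξ})(1−q e^{2iξ})) and E_n = q^{−n}(1−q^n)(1−abcd q^{n−1}). Then for all 1 ≤ j ≤ n one has π(n+1−j)/k₋ ≤ ξ_j ≤ π(n+1−j)/k₊, and for all 1 ≤ j < j′ ≤ n one has π(j′−j)/k₋ ≤ ξ_j − ξ_{j′} ≤ π(j′−j)/k₊, where k₊ and k₋ are defined as k_± = (n−1)((1−|q|)/(1+|q|))^{±1} + (1/2)( ((1−|a|)/(1+|a|))^{±1} + ((1−|b|)/(1+|b|))^{±1}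 + ((1−|c|)/(1+|c|))^{±1} + ((1−|d|)/(1+|d|))^{±1} ). -/

import Mathlib

/-!
At a zero `x = ξ m` the right-hand side of the difference equation vanishes and the two terms on
the left are complex conjugate, so `A x * p (cos (x - i log q))` is purely imaginary. Every factor
`1 - r e^{iθ}` is a real multiple of `e^{i φ_r(θ)}`, where
`φ_r(θ) = arctan (-r sin θ / (1 - r cos θ))`, and collecting the phases turns this into: the phase sum
`G m = ∑_{j ≠ m} (ξ m - φ_q(ξ m - ξ j) - φ_q(ξ m + ξ j)) + ∑_{t ∈ {a,b,c,d}} (ξ m / 2 - φ_t(ξ m))`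
(`phaseSum q ![a, b, c, d] ξ (univ.erase m) (ξ m)` below) is a multiple of `π`. As `φ_r'` lies between `-|r|/(1-|r|)` and `|r|/(1+|r|)`, the mean value
theorem squeezes `G m` between `k₊ ξ m` and `k₋ ξ m`, and its increments likewise. Hence the
`G m / π` are integers in `[1, n]` strictly decreasing in `m`, so `G m = (n - m) π`, which gives
both bounds.
-/

open Real Finset

def SlopeBetween (lo hi : ℝ) (f : ℝ → ℝ) : Prop :=
  ∀ ⦃x y : ℝ⦄, x ≤ y → lo * (y - x) ≤ f y - f x ∧ f y - f x ≤ hi * (y - x)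

namespace SlopeBetween

variable {lo hi lo' hi' : ℝ} {f g : ℝ → ℝ}

lemma of_hasDerivAt {f' : ℝ → ℝ} (hf : ∀ x, HasDerivAt f (f' x) x)
    (hlo : ∀ x, lo ≤ f' x) (hhi : ∀ x, f' x ≤ hi) : SlopeBetween lo hi f := by
  have hdiff : Differentiable ℝ f := fun x => (hf x).differentiableAt
  intro x y hxy
  exact ⟨mul_sub_le_image_sub_of_le_deriv hdiff (fun z => (hf z).deriv ▸ hlo z) hxy,
    image_sub_le_mul_sub_of_deriv_le hdiff (fun z => (hf z).deriv ▸ hhi z) hxy⟩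

lemma id : SlopeBetween 1 1 (fun x => x) := fun x y _ => by simp

lemma add (hf : SlopeBetween lo hi f) (hg : SlopeBetween lo' hi' g) :
    SlopeBetween (lo + lo') (hi + hi') (fun x => f x + g x) := fun x y hxy => by
  obtain ⟨hf₁, hf₂⟩ := hf hxy
  obtain ⟨hg₁, hg₂⟩ := hg hxy
  constructor <;> linarith

lemma sub (hf : SlopeBetween lo hi f) (hg : SlopeBetween lo' hi' g) :
    SlopeBetween (lo - hi') (hi - lo') (fun x => f x - g x) := fun x y hxy => by
  obtain ⟨hf₁, hf₂⟩ := hf hxy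
  obtain ⟨hg₁, hg₂⟩ := hg hxy
  constructor <;> linarith

lemma const_mul (hf : SlopeBetween lo hi f) {c : ℝ} (hc : 0 ≤ c) :
    SlopeBetween (c * lo) (c * hi) (fun x => c * f x) := fun x y hxy => by
  obtain ⟨hf₁, hf₂⟩ := hf hxy
  constructor <;> nlinarith

lemma comp_add_const (hf : SlopeBetween lo hi f) (c : ℝ) :
    SlopeBetween lo hi (fun x => f (x + c)) := fun x y hxy => by
  have h := hf (x := x + c) (y := y + c) (by linarith)
  rwa [add_sub_add_right_eq_sub] at h

lemma finset_sum {ι : Type*} (s : Finset ι) {f : ι → ℝ → ℝ} {lo hi : ι → ℝ}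
    (hf : ∀ i ∈ s, SlopeBetween (lo i) (hi i) (f i)) :
    SlopeBetween (∑ i ∈ s, lo i) (∑ i ∈ s, hi i) (fun x => ∑ i ∈ s, f i x) := fun x y hxy => by
  simp only [← Finset.sum_sub_distrib, Finset.sum_mul]
  exact ⟨Finset.sum_le_sum fun i hi => (hf i hi hxy).1,
    Finset.sum_le_sum fun i hi => (hf i hi hxy).2⟩

end SlopeBetween

noncomputable def ratioAbs (r : ℝ) : ℝ := (1 - |r|) / (1 + |r|)

lemma ratioAbs_pos {r : ℝ} (hr : |r| < 1) : 0 < ratioAbs r :=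
  div_pos (by linarith) (by positivity)

/-- The argument of `1 - r e^{iθ}`, see `isArgModPi_one_sub_mul_exp`. -/
noncomputable def phase (r θ : ℝ) : ℝ := arctan (-(r * sin θ) / (1 - r * cos θ))

lemma phase_zero (r : ℝ) : phase r 0 = 0 := by simp [phase]

lemma phase_neg (r θ : ℝ) : phase r (-θ) = -phase r θ := by
  simp [phase, ← arctan_neg, neg_div]

lemma phase_pi_add (r θ : ℝ) : phase r (π + θ) = -phase r (π - θ) := by
  simp [phase, sin_add, cos_add, ← arctan_neg, neg_div]

lemma phase_pi (r : ℝ) : phase r π = 0 := by simp [phase]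

lemma one_sub_mul_cos_pos {r : ℝ} (hr : |r| < 1) (θ : ℝ) : 0 < 1 - r * cos θ := by
  have : r * cos θ ≤ |r| := by
    calc r * cos θ ≤ |r * cos θ| := le_abs_self _
      _ = |r| * |cos θ| := abs_mul _ _
      _ ≤ |r| := mul_le_of_le_one_right (abs_nonneg r) (abs_cos_le_one θ)
  linarith

lemma one_sub_two_mul_cos_add_sq_pos {r : ℝ} (hr : |r| < 1) (θ : ℝ) :
    0 < 1 - 2 * r * cos θ + r ^ 2 := by
  nlinarith [pow_pos (one_sub_mul_cos_pos hr θ) 2, sq_nonneg (r * sin θ), sin_sq_add_cos_sq θ]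

lemma hasDerivAt_phase {r : ℝ} (hr : |r| < 1) (θ : ℝ) :
    HasDerivAt (phase r) ((r ^ 2 - r * cos θ) / (1 - 2 * r * cos θ + r ^ 2)) θ := by
  have hw := (one_sub_mul_cos_pos hr θ).ne'
  have hu : HasDerivAt (fun t => -(r * sin t) / (1 - r * cos t))
      ((-(r * cos θ) * (1 - r * cos θ) - -(r * sin θ) * (r * sin θ)) / (1 - r * cos θ) ^ 2) θ :=
    ((hasDerivAt_sin θ).const_mul r).neg.div
      (by simpa using ((hasDerivAt_cos θ).const_mul r).const_sub 1) hw
  refine ((hasDerivAt_arctan _).comp θ hu).congr_deriv ?_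
  have hs := sin_sq_add_cos_sq θ
  have hsq : 1 + (-(r * sin θ) / (1 - r * cos θ)) ^ 2
      = (1 - 2 * r * cos θ + r ^ 2) / (1 - r * cos θ) ^ 2 := by
    field_simp
    linear_combination r ^ 2 * hs
  have hD := (one_sub_two_mul_cos_add_sq_pos hr θ).ne'
  rw [hsq]
  field_simp
  linear_combination r ^ 2 * hs

lemma phase_deriv_bounds {r : ℝ} (hr : |r| < 1) (θ : ℝ) :
    -(|r| / (1 - |r|)) ≤ (r ^ 2 - r * cos θ) / (1 - 2 * r * cos θ + r ^ 2) ∧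
      (r ^ 2 - r * cos θ) / (1 - 2 * r * cos θ + r ^ 2) ≤ |r| / (1 + |r|) := by
  have hD := one_sub_two_mul_cos_add_sq_pos hr θ
  have hc := neg_one_le_cos θ
  have hc' := cos_le_one θ
  constructor
  · rw [neg_le, ← neg_div, div_le_div_iff₀ hD (by linarith)]
    rcases abs_cases r with ⟨h, h0⟩ | ⟨h, h0⟩
    · nlinarith [mul_nonneg (mul_nonneg h0 (by linarith : (0 : ℝ) ≤ 1 + r))
        (by linarith : (0 : ℝ) ≤ 1 - cos θ)]
    · nlinarith [mul_nonneg (mul_nonneg (by linarith : (0 : ℝ) ≤ -r)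
        (by linarith : (0 : ℝ) ≤ 1 - r))
        (by linarith : (0 : ℝ) ≤ 1 + cos θ)]
  · rw [div_le_div_iff₀ hD (by positivity)]
    rcases abs_cases r with ⟨h, h0⟩ | ⟨h, h0⟩
    · nlinarith [mul_nonneg (mul_nonneg h0 (by linarith : (0 : ℝ) ≤ 1 - r))
        (by linarith : (0 : ℝ) ≤ 1 + cos θ)]
    · nlinarith [mul_nonneg (mul_nonneg (by linarith : (0 : ℝ) ≤ -r)
        (by linarith : (0 : ℝ) ≤ 1 + r))
        (by linarith : (0 : ℝ) ≤ 1 - cos θ)]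

lemma slopeBetween_phase {r : ℝ} (hr : |r| < 1) :
    SlopeBetween ((1 - (ratioAbs r)⁻¹) / 2) ((1 - ratioAbs r) / 2) (phase r) := by
  have h₁ : 0 < 1 - |r| := by linarith
  have hlo : (1 - (ratioAbs r)⁻¹) / 2 = -(|r| / (1 - |r|)) := by
    unfold ratioAbs; field_simp; ring
  have hhi : (1 - ratioAbs r) / 2 = |r| / (1 + |r|) := by
    unfold ratioAbs; field_simp; ring
  rw [hlo, hhi]
  exact .of_hasDerivAt (hasDerivAt_phase hr) (fun θ => (phase_deriv_bounds hr θ).1)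
    (fun θ => (phase_deriv_bounds hr θ).2)

lemma slopeBetween_pairPhase {q : ℝ} (hq : |q| < 1) (c : ℝ) :
    SlopeBetween (ratioAbs q) (ratioAbs q)⁻¹ (fun x => x - phase q (x - c) - phase q (x + c)) := by
  have h := (SlopeBetween.id.sub ((slopeBetween_phase hq).comp_add_const (-c))).sub
    ((slopeBetween_phase hq).comp_add_const c)
  convert h using 1
  · ring
  · ring
  · simp only [sub_eq_add_neg]

lemma slopeBetween_sub_two_mul_phase {q : ℝ} (hq : |q| < 1) :
    SlopeBetween (ratioAbs q) (ratioAbs q)⁻¹ (fun x => x - 2 * phase q x) := by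
  convert SlopeBetween.id.sub ((slopeBetween_phase hq).const_mul zero_le_two) using 1 <;> ring

lemma slopeBetween_half_sub_phase {r : ℝ} (hr : |r| < 1) :
    SlopeBetween (ratioAbs r / 2) ((ratioAbs r)⁻¹ / 2) (fun x => x / 2 - phase r x) := by
  convert (SlopeBetween.id.const_mul one_half_pos.le).sub (slopeBetween_phase hr) using 1
  · ring
  · ring
  · funext x; ring

section PhaseSum

variable {ι κ : Type*} [Fintype ι]

noncomputable def phaseSum (q : ℝ) (t : ι → ℝ) (c : κ → ℝ) (s : Finset κ) (x : ℝ) : ℝ :=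
  ∑ j ∈ s, (x - phase q (x - c j) - phase q (x + c j)) + ∑ i, (x / 2 - phase (t i) x)

variable {q : ℝ} {t : ι → ℝ}

lemma phaseSum_insert [DecidableEq κ] (c : κ → ℝ) {s : Finset κ} {j : κ} (hj : j ∉ s) (x : ℝ) :
    phaseSum q t c (insert j s) x =
      phaseSum q t c s x + (x - phase q (x - c j) - phase q (x + c j)) := by
  simp only [phaseSum, Finset.sum_insert hj]
  ring

lemma phaseSum_zero (c : κ → ℝ) (s : Finset κ) : phaseSum q t c s 0 = 0 := by
  simp [phaseSum, phase_zero, phase_neg]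

lemma phaseSum_pi (c : κ → ℝ) (s : Finset κ) :
    phaseSum q t c s π = (#s + Fintype.card ι / 2) * π := by
  simp only [phaseSum, phase_pi_add, phase_pi, sub_neg_eq_add, sub_add_cancel, sub_zero,
    Finset.sum_const, Finset.card_univ, nsmul_eq_mul]
  ring

lemma slopeBetween_phaseSum (ht : ∀ i, |t i| < 1) (hq : |q| < 1) (c : κ → ℝ) (s : Finset κ) :
    SlopeBetween (#s * ratioAbs q + ∑ i, ratioAbs (t i) / 2)
      (#s * (ratioAbs q)⁻¹ + ∑ i, (ratioAbs (t i))⁻¹ / 2) (phaseSum q t c s) := by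
  convert (SlopeBetween.finset_sum s fun j _ => slopeBetween_pairPhase hq (c j)).add
    (SlopeBetween.finset_sum univ fun i _ => slopeBetween_half_sub_phase (ht i)) using 1
  · simp
  · simp
  · rfl

end PhaseSum

namespace Complex

def IsArgModPi (w : ℂ) (ψ : ℝ) : Prop := ∃ s : ℝ, s ≠ 0 ∧ w = s * exp (I * ψ)

namespace IsArgModPi

variable {w w' : ℂ} {ψ ψ' : ℝ}

lemma ofReal {s : ℝ} (hs : s ≠ 0) : IsArgModPi s 0 := ⟨s, hs, by simp⟩

lemma exp_I_mul (ψ : ℝ) : IsArgModPi (exp (I * ψ)) ψ := ⟨1, one_ne_zero, by simp⟩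

lemma congr_arg (h : IsArgModPi w ψ) (hψ : ψ = ψ') : IsArgModPi w ψ' := hψ ▸ h

lemma mul (h : IsArgModPi w ψ) (h' : IsArgModPi w' ψ') : IsArgModPi (w * w') (ψ + ψ') := by
  obtain ⟨s, hs, rfl⟩ := h
  obtain ⟨s', hs', rfl⟩ := h'
  refine ⟨s * s', mul_ne_zero hs hs', ?_⟩
  push_cast
  rw [mul_add, exp_add]
  ring

lemma div (h : IsArgModPi w ψ) (h' : IsArgModPi w' ψ') : IsArgModPi (w / w') (ψ - ψ') := by
  obtain ⟨s, hs, rfl⟩ := h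
  obtain ⟨s', hs', rfl⟩ := h'
  refine ⟨s / s', div_ne_zero hs hs', ?_⟩
  push_cast
  rw [mul_sub, exp_sub]
  field_simp

lemma prod {ι : Type*} (s : Finset ι) {w : ι → ℂ} {ψ : ι → ℝ}
    (h : ∀ i ∈ s, IsArgModPi (w i) (ψ i)) : IsArgModPi (∏ i ∈ s, w i) (∑ i ∈ s, ψ i) := by
  classical
  induction s using Finset.induction_on with
  | empty => simpa using ofReal one_ne_zero
  | insert i s hi ih =>
    rw [Finset.prod_insert hi, Finset.sum_insert hi]
    exact (h i (Finset.mem_insert_self i s)).mul (ih fun j hj => h j (Finset.mem_insert_of_mem hj))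

lemma of_re_im {s : ℝ} (hs : s ≠ 0) (hre : w.re = s * Real.cos ψ) (him : w.im = s * Real.sin ψ) :
    IsArgModPi w ψ := by
  refine ⟨s, hs, Complex.ext ?_ ?_⟩ <;>
    simp only [re_ofReal_mul, im_ofReal_mul, mul_comm I, exp_ofReal_mul_I_re, exp_ofReal_mul_I_im,
      hre, him]

lemma ne_zero (h : IsArgModPi w ψ) : w ≠ 0 := by
  obtain ⟨s, hs, rfl⟩ := h
  exact mul_ne_zero (ofReal_ne_zero.2 hs) (Complex.exp_ne_zero _)

lemma cos_eq_zero (h : IsArgModPi w ψ) (hw : w.re = 0) : Real.cos ψ = 0 := by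
  obtain ⟨s, hs, rfl⟩ := h
  rw [re_ofReal_mul, mul_comm I, exp_ofReal_mul_I_re] at hw
  exact (mul_eq_zero.1 hw).resolve_left hs

end IsArgModPi

lemma isArgModPi_of_re_pos {w : ℂ} (hw : 0 < w.re) : IsArgModPi w (Real.arctan (w.im / w.re)) := by
  set φ := Real.arctan (w.im / w.re)
  have hcos : 0 < Real.cos φ := Real.cos_arctan_pos _
  have htan : Real.sin φ / Real.cos φ = w.im / w.re := by
    rw [← Real.tan_eq_sin_div_cos, Real.tan_arctan]
  refine .of_re_im (div_ne_zero hw.ne' hcos.ne') (div_mul_cancel₀ _ hcos.ne').symm ?_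
  rw [div_mul_eq_mul_div, mul_div_assoc, htan, mul_div_cancel₀ _ hw.ne']

end Complex

open Complex

lemma isArgModPi_one_sub_mul_exp {r : ℝ} (hr : |r| < 1) (θ : ℝ) :
    IsArgModPi (1 - r * Complex.exp (I * θ)) (phase r θ) := by
  have hre : (1 - r * Complex.exp (I * θ)).re = 1 - r * Real.cos θ := by
    simp [mul_comm I, exp_ofReal_mul_I_re]
  have him : (1 - r * Complex.exp (I * θ)).im = -(r * Real.sin θ) := by
    simp [mul_comm I, exp_ofReal_mul_I_im]
  have h := isArgModPi_of_re_pos (hre ▸ one_sub_mul_cos_pos hr θ)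
  rwa [hre, him] at h

lemma isArgModPi_one_sub_exp_two_mul {θ : ℝ} (hθ : Real.sin θ ≠ 0) :
    IsArgModPi (1 - Complex.exp (2 * I * θ)) (θ - π / 2) := by
  refine .of_re_im (mul_ne_zero two_ne_zero hθ) ?_ ?_
  · simp only [sub_re, one_re, exp_re, Real.cos_sub_pi_div_two]
    simp [Real.cos_two_mul, Real.cos_sq']
    ring
  · simp [exp_im, Real.sin_sub_pi_div_two, Real.sin_two_mul]

open ComplexConjugate

/-- `cos (θ - i log q)`, the point at which the `q`-difference equation evaluates `p`. -/
noncomputable def shift (q θ : ℝ) : ℂ :=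
  ((q : ℂ) * Complex.exp (I * θ) + (q : ℂ)⁻¹ * Complex.exp (-(I * θ))) / 2

lemma shift_sub_cos (q θ θ' : ℝ) (hq0 : q ≠ 0) :
    shift q θ - Real.cos θ' = ((1 / (2 * q) : ℝ) : ℂ) * Complex.exp (I * ↑(-θ)) *
      ((1 - q * Complex.exp (I * ↑(θ - θ'))) * (1 - q * Complex.exp (I * ↑(θ + θ')))) := by
  have hq : (q : ℂ) ≠ 0 := ofReal_ne_zero.2 hq0
  have hcos : (Real.cos θ' : ℂ) = (Complex.exp (I * θ') + (Complex.exp (I * θ'))⁻¹) / 2 := by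
    rw [ofReal_cos, Complex.cos, ← Complex.exp_neg, mul_comm]
    ring_nf
  simp only [shift, hcos, ofReal_neg, ofReal_sub, ofReal_add, mul_neg, mul_sub, mul_add,
    Complex.exp_neg, Complex.exp_sub, Complex.exp_add]
  have h₁ := Complex.exp_ne_zero (I * θ)
  have h₂ := Complex.exp_ne_zero (I * θ')
  push_cast
  field_simp
  ring_nf

lemma isArgModPi_shift_sub_cos {q : ℝ} (hq : |q| < 1) (hq0 : q ≠ 0) (θ θ' : ℝ) :
    IsArgModPi (shift q θ - Real.cos θ') (-θ + phase q (θ - θ') + phase q (θ + θ')) := by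
  rw [shift_sub_cos q θ θ' hq0]
  refine ((((IsArgModPi.ofReal ?_).mul (.exp_I_mul _)).mul
    ((isArgModPi_one_sub_mul_exp hq _).mul (isArgModPi_one_sub_mul_exp hq _)))).congr_arg ?_
  · simpa using hq0
  · ring

lemma conj_shift (q θ : ℝ) : conj (shift q θ) = shift q (-θ) := by
  simp [shift, map_div₀, ← Complex.exp_conj, map_ofNat]

section Weight

variable {ι : Type*} [Fintype ι]

noncomputable def askeyWilsonWeight (t : ι → ℝ) (q θ : ℝ) : ℂ :=
  (∏ i, (1 - (t i : ℂ) * Complex.exp (I * θ))) /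
    ((1 - Complex.exp (2 * I * θ)) * (1 - q * Complex.exp (2 * I * θ)))

lemma conj_askeyWilsonWeight (t : ι → ℝ) (q θ : ℝ) :
    conj (askeyWilsonWeight t q θ) = askeyWilsonWeight t q (-θ) := by
  simp [askeyWilsonWeight, map_div₀, map_prod, ← Complex.exp_conj, map_ofNat]

lemma isArgModPi_askeyWilsonWeight {t : ι → ℝ} (ht : ∀ i, |t i| < 1) {q : ℝ} (hq : |q| < 1)
    {θ : ℝ} (hθ : Real.sin θ ≠ 0) :
    IsArgModPi (askeyWilsonWeight t q θ) (∑ i, phase (t i) θ - (θ - π / 2 + phase q (2 * θ))) := by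
  have hq2 := isArgModPi_one_sub_mul_exp hq (2 * θ)
  rw [ofReal_mul, ofReal_ofNat, mul_left_comm, ← mul_assoc] at hq2
  exact (IsArgModPi.prod univ fun i _ => isArgModPi_one_sub_mul_exp (ht i) θ).div
    ((isArgModPi_one_sub_exp_two_mul hθ).mul hq2)

lemma isArgModPi_askeyWilsonWeight_mul_prod {t : ι → ℝ} (ht : ∀ i, |t i| < 1)
    (hι : Fintype.card ι = 4) {q : ℝ} (hq : |q| < 1) (hq0 : q ≠ 0) {n : ℕ} (ξ : Fin n → ℝ)
    {m : Fin n} (hm : Real.sin (ξ m) ≠ 0) :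
    IsArgModPi (askeyWilsonWeight t q (ξ m) * ∏ j, (shift q (ξ m) - Real.cos (ξ j)))
      (π / 2 - phaseSum q t ξ (univ.erase m) (ξ m)) := by
  refine ((isArgModPi_askeyWilsonWeight ht hq hm).mul
    (IsArgModPi.prod univ fun j _ => isArgModPi_shift_sub_cos hq hq0 _ _)).congr_arg ?_
  -- the factor `j = m` has phase `-ξ m + φ_q(2 ξ m)`, cancelling that of `1 - q e^{2i ξ m}`
  rw [← Finset.add_sum_erase _ _ (mem_univ m)]
  simp only [phaseSum, sub_self, phase_zero, Finset.sum_sub_distrib, Finset.sum_add_distrib,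
    Finset.sum_const, Finset.card_univ, hι, nsmul_eq_mul]
  ring_nf

lemma re_mul_eq_zero_of_root {n : ℕ} {ξ : Fin n → ℝ} {p : ℂ → ℂ}
    (hp : ∀ z, p z = ∏ j, (z - Real.cos (ξ j))) {A : ℝ → ℂ} (hA : ∀ x, conj (A x) = A (-x))
    {q : ℝ} {E : ℂ} (m : Fin n)
    (heq : A (ξ m) * (p (shift q (ξ m)) - p (Real.cos (ξ m))) +
      A (-ξ m) * (p (shift q (-ξ m)) - p (Real.cos (ξ m))) = E * p (Real.cos (ξ m))) :
    (A (ξ m) * p (shift q (ξ m))).re = 0 := by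
  have hroot : p (Real.cos (ξ m)) = 0 := by
    rw [hp]; exact prod_eq_zero (mem_univ m) (sub_self _)
  have hconj : ∀ z, p (conj z) = conj (p z) := fun z => by
    simp only [hp, map_prod, map_sub, Complex.conj_ofReal]
  rw [hroot, sub_zero, sub_zero, mul_zero, ← hA, ← conj_shift, hconj, ← map_mul, Complex.add_conj]
    at heq
  rw [ofReal_eq_zero, mul_eq_zero] at heq
  exact heq.resolve_left two_ne_zero

lemma sin_phaseSum_eq_zero {t : ι → ℝ} (ht : ∀ i, |t i| < 1)
    (hι : Fintype.card ι = 4) {q : ℝ} (hq : |q| < 1) (hq0 : q ≠ 0) {n : ℕ} {ξ : Fin n → ℝ}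
    {p : ℂ → ℂ} (hp : ∀ z, p z = ∏ j, (z - Real.cos (ξ j))) {E : ℂ}
    (heq : ∀ x : ℝ, Complex.exp (2 * I * x) ≠ 1 →
      askeyWilsonWeight t q x * (p (shift q x) - p (Real.cos x)) +
        askeyWilsonWeight t q (-x) * (p (shift q (-x)) - p (Real.cos x)) = E * p (Real.cos x))
    {m : Fin n} (hm : Real.sin (ξ m) ≠ 0) :
    Real.sin (phaseSum q t ξ (univ.erase m) (ξ m)) = 0 := by
  have hexp : Complex.exp (2 * I * ξ m) ≠ 1 := fun h =>
    (isArgModPi_one_sub_exp_two_mul hm).ne_zero (sub_eq_zero.2 h.symm)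
  have hre := re_mul_eq_zero_of_root hp (conj_askeyWilsonWeight t q) m (heq (ξ m) hexp)
  rw [hp] at hre
  simpa [Real.cos_pi_div_two_sub] using
    (isArgModPi_askeyWilsonWeight_mul_prod ht hι hq hq0 ξ hm).cos_eq_zero hre

end Weight

section Roots

variable {ι : Type*} [Fintype ι] {q : ℝ} {t : ι → ℝ} {n : ℕ} {ξ : Fin n → ℝ}

noncomputable def kPlus (n : ℕ) (q : ℝ) (t : ι → ℝ) : ℝ :=
  (n - 1) * ratioAbs q + ∑ i, ratioAbs (t i) / 2

noncomputable def kMinus (n : ℕ) (q : ℝ) (t : ι → ℝ) : ℝ :=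
  (n - 1) * (ratioAbs q)⁻¹ + ∑ i, (ratioAbs (t i))⁻¹ / 2

lemma kPlus_pos [Nonempty ι] (ht : ∀ i, |t i| < 1) (hq : |q| < 1) (hn : 1 ≤ n) :
    0 < kPlus n q t := by
  have hn' : (1 : ℝ) ≤ n := by exact_mod_cast hn
  have := ratioAbs_pos hq
  have := Finset.sum_pos (fun i _ => half_pos (ratioAbs_pos (ht i))) univ_nonempty
  unfold kPlus
  nlinarith

lemma kMinus_pos [Nonempty ι] (ht : ∀ i, |t i| < 1) (hq : |q| < 1) (hn : 1 ≤ n) :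
    0 < kMinus n q t := by
  have hn' : (1 : ℝ) ≤ n := by exact_mod_cast hn
  have := inv_pos.2 (ratioAbs_pos hq)
  have := Finset.sum_pos (fun i _ => half_pos (inv_pos.2 (ratioAbs_pos (ht i)))) univ_nonempty
  unfold kMinus
  nlinarith

lemma card_erase_univ (m : Fin n) : (#(univ.erase m) : ℝ) = n - 1 := by
  rw [card_erase_of_mem (mem_univ m), card_univ, Fintype.card_fin, Nat.cast_pred m.pos]

lemma slopeBetween_phaseSum_erase (ht : ∀ i, |t i| < 1) (hq : |q| < 1) (ξ : Fin n → ℝ)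
    (m : Fin n) : SlopeBetween (kPlus n q t) (kMinus n q t) (phaseSum q t ξ (univ.erase m)) := by
  have h := slopeBetween_phaseSum ht hq ξ (univ.erase m)
  rwa [card_erase_univ] at h

lemma phaseSum_erase_bounds (ht : ∀ i, |t i| < 1) (hq : |q| < 1) {m : Fin n} (hm : 0 ≤ ξ m) :
    kPlus n q t * ξ m ≤ phaseSum q t ξ (univ.erase m) (ξ m) ∧
      phaseSum q t ξ (univ.erase m) (ξ m) ≤ kMinus n q t * ξ m := by
  have h := slopeBetween_phaseSum_erase ht hq ξ m hm
  rwa [phaseSum_zero, sub_zero, sub_zero] at h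

lemma phaseSum_erase_lt [Nonempty ι] (ht : ∀ i, |t i| < 1) (hq : |q| < 1) {m : Fin n}
    (hm : ξ m < π) :
    phaseSum q t ξ (univ.erase m) (ξ m) < (n - 1 + Fintype.card ι / 2) * π := by
  have h := (slopeBetween_phaseSum_erase ht hq ξ m hm.le).1
  rw [phaseSum_pi, card_erase_univ] at h
  nlinarith [mul_pos (kPlus_pos ht hq m.pos) (sub_pos.2 hm)]

/-- The two terms pairing `ξ m` with `ξ m'` combine into `x - 2 φ_q(x)` at `x = ξ m - ξ m'`. -/
lemma phaseSum_erase_sub_bounds (ht : ∀ i, |t i| < 1) (hq : |q| < 1) {m m' : Fin n}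
    (hmm' : m ≠ m') (hξ : ξ m' ≤ ξ m) :
    kPlus n q t * (ξ m - ξ m') ≤
        phaseSum q t ξ (univ.erase m) (ξ m) - phaseSum q t ξ (univ.erase m') (ξ m') ∧
      phaseSum q t ξ (univ.erase m) (ξ m) - phaseSum q t ξ (univ.erase m') (ξ m') ≤
        kMinus n q t * (ξ m - ξ m') := by
  set S := (univ.erase m).erase m'
  have hSm : univ.erase m = insert m' S :=
    (insert_erase (mem_erase.2 ⟨hmm'.symm, mem_univ m'⟩)).symm
  have hSm' : univ.erase m' = insert m S := by
    rw [show S = (univ.erase m').erase m from erase_right_comm]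
    exact (insert_erase (mem_erase.2 ⟨hmm', mem_univ m⟩)).symm
  have hcard : (#S : ℝ) = n - 2 := by
    rw [card_erase_of_mem (mem_erase.2 ⟨hmm'.symm, mem_univ m'⟩), Nat.cast_pred, card_erase_univ]
    · ring
    · exact card_pos.2 ⟨m', mem_erase.2 ⟨hmm'.symm, mem_univ m'⟩⟩
  have hS := slopeBetween_phaseSum ht hq ξ S hξ
  have hpair := slopeBetween_sub_two_mul_phase hq (sub_nonneg.2 hξ)
  rw [hSm, hSm', phaseSum_insert ξ (notMem_erase m' _), phaseSum_insert ξ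
    (fun h => notMem_erase m _ (mem_of_mem_erase h))]
  rw [hcard] at hS
  simp only [sub_zero, mul_zero, phase_zero] at hpair
  have hodd : phase q (ξ m' - ξ m) = -phase q (ξ m - ξ m') := by rw [← phase_neg, neg_sub]
  rw [hodd, add_comm (ξ m') (ξ m)]
  unfold kPlus kMinus
  constructor <;> nlinarith [hS.1, hS.2, hpair.1, hpair.2]

end Roots

lemma eq_nat_sub_of_strictAnti {n : ℕ} {K : Fin n → ℤ} (hK : StrictAnti K) (h1 : ∀ j, 1 ≤ K j)
    (hn : ∀ j, K j ≤ n) (j : Fin n) : K j = n - j := by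
  obtain _ | k := n
  · exact j.elim0
  have hL : Antitone fun i : Fin (k + 1) => K i + i :=
    Fin.antitone_iff_succ_le.2 fun i => by
      have := hK (Fin.castSucc_lt_succ (i := i))
      simp only [Fin.val_succ, Fin.val_castSucc]
      push_cast
      omega
  have h₀ := hL (Fin.zero_le j)
  have h₁ := hL (Fin.le_last j)
  have := hn 0
  have := h1 (Fin.last k)
  simp only [Fin.val_zero, Fin.val_last] at h₀ h₁
  push_cast at h₀ h₁ ⊢
  omega

lemma eq_nat_sub_mul_pi_of_sin_eq_zero {n : ℕ} {G : Fin n → ℝ} (hsin : ∀ m, Real.sin (G m) = 0)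
    (hpos : ∀ m, 0 < G m) (hlt : ∀ m, G m < (n + 1) * π) (hanti : StrictAnti G) (j : Fin n) :
    G j = (n - j) * π := by
  choose K hK using fun m => Real.sin_eq_zero_iff.1 (hsin m)
  have hK' : StrictAnti K := fun m m' h => by
    have := hanti h
    rw [← hK, ← hK] at this
    exact_mod_cast lt_of_mul_lt_mul_right this pi_pos.le
  have hK1 : ∀ m, 1 ≤ K m := fun m => by
    have := hpos m
    rw [← hK] at this
    have : (0 : ℝ) < K m := pos_of_mul_pos_left this pi_pos.le
    exact_mod_cast this
  have hKn : ∀ m, K m ≤ n := fun m => by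
    have := hlt m
    rw [← hK] at this
    have : (K m : ℝ) < n + 1 := lt_of_mul_lt_mul_right this pi_pos.le
    exact Int.lt_add_one_iff.1 (by exact_mod_cast this)
  rw [← hK, eq_nat_sub_of_strictAnti hK' hK1 hKn j]
  push_cast
  ring

lemma div_le_and_le_div {kp km x y : ℝ} (hkp : 0 < kp) (hkm : 0 < km)
    (h : kp * x ≤ y ∧ y ≤ km * x) : y / km ≤ x ∧ x ≤ y / kp :=
  ⟨(div_le_iff₀ hkm).2 (by linarith [mul_comm x km]),
    (le_div_iff₀ hkp).2 (by linarith [mul_comm x kp])⟩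

lemma phaseSum_erase_eq_mul_pi {ι : Type*} [Fintype ι] {t : ι → ℝ} (ht : ∀ i, |t i| < 1)
    (hι : Fintype.card ι = 4) {q : ℝ} (hq : |q| < 1) (hq0 : q ≠ 0) {n : ℕ} {ξ : Fin n → ℝ}
    (hpos : ∀ j, 0 < ξ j) (hlt : ∀ j, ξ j < π) (hξ : StrictAnti ξ)
    {p : ℂ → ℂ} (hp : ∀ z, p z = ∏ j, (z - Real.cos (ξ j))) {E : ℂ}
    (heq : ∀ x : ℝ, Complex.exp (2 * I * x) ≠ 1 →
      askeyWilsonWeight t q x * (p (shift q x) - p (Real.cos x)) +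
        askeyWilsonWeight t q (-x) * (p (shift q (-x)) - p (Real.cos x)) = E * p (Real.cos x))
    (j : Fin n) : phaseSum q t ξ (univ.erase j) (ξ j) = (n - j) * π := by
  have : Nonempty ι := Fintype.card_pos_iff.1 (by omega)
  refine eq_nat_sub_mul_pi_of_sin_eq_zero (G := fun m => phaseSum q t ξ (univ.erase m) (ξ m))
    (fun m => ?_) (fun m => ?_) (fun m => ?_)
    (fun m m' h => ?_) j
  · exact sin_phaseSum_eq_zero ht hι hq hq0 hp heq (sin_pos_of_pos_of_lt_pi (hpos m) (hlt m)).ne'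
  · exact (mul_pos (kPlus_pos ht hq m.pos) (hpos m)).trans_le
      (phaseSum_erase_bounds ht hq (hpos m).le).1
  · have := phaseSum_erase_lt ht hq (hlt m)
    rw [hι] at this
    linarith
  · have := (phaseSum_erase_sub_bounds ht hq h.ne (hξ h).le).1
    nlinarith [mul_pos (kPlus_pos ht hq m.pos) (sub_pos.2 (hξ h))]

theorem askey_wilson_zero_bounds
    (n : ℕ) (a b c d q : ℝ)
    (ha : |a| < 1) (hb : |b| < 1) (hc : |c| < 1) (hd : |d| < 1)
    (hq : |q| < 1) (hq0 : q ≠ 0)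
    (ξ : Fin n → ℝ)
    (hpos : ∀ j, 0 < ξ j) (hlt : ∀ j, ξ j < π)
    (hdec : ∀ j j' : Fin n, j < j' → ξ j' < ξ j)
    (p : ℂ → ℂ)
    (hp : ∀ z : ℂ, p z = ∏ j : Fin n, (z - (Real.cos (ξ j) : ℂ)))
    (A : ℝ → ℂ)
    (hA : ∀ x : ℝ, A x =
      ((1 - (a : ℂ) * Complex.exp (Complex.I * (x : ℂ))) *
       (1 - (b : ℂ) * Complex.exp (Complex.I * (x : ℂ))) *
       (1 - (c : ℂ) * Complex.exp (Complex.I * (x : ℂ))) *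
       (1 - (d : ℂ) * Complex.exp (Complex.I * (x : ℂ)))) /
      ((1 - Complex.exp (2 * Complex.I * (x : ℂ))) *
       (1 - (q : ℂ) * Complex.exp (2 * Complex.I * (x : ℂ)))))
    (En : ℝ)
    (heq : ∀ x : ℝ, Complex.exp (2 * Complex.I * (x : ℂ)) ≠ 1 →
      A x * (p (((q : ℂ) * Complex.exp (Complex.I * (x : ℂ)) +
                 (q : ℂ)⁻¹ * Complex.exp (-(Complex.I * (x : ℂ)))) / 2)
              - p ((Real.cos x : ℂ))) +
      A (-x) * (p (((q : ℂ) * Complex.exp (-(Complex.I * (x : ℂ))) +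
                 (q : ℂ)⁻¹ * Complex.exp (Complex.I * (x : ℂ))) / 2)
              - p ((Real.cos x : ℂ)))
      = (En : ℂ) * p ((Real.cos x : ℂ)))
    (km kp : ℝ)
    (hkm : km = ((n : ℝ) - 1) * ((1 + |q|) / (1 - |q|)) +
      (1 / 2) * ((1 + |a|) / (1 - |a|) + (1 + |b|) / (1 - |b|) +
                 (1 + |c|) / (1 - |c|) + (1 + |d|) / (1 - |d|)))
    (hkp : kp = ((n : ℝ) - 1) * ((1 - |q|) / (1 + |q|)) +
      (1 / 2) * ((1 - |a|) / (1 + |a|) + (1 - |b|) / (1 + |b|) +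
                 (1 - |c|) / (1 + |c|) + (1 - |d|) / (1 + |d|))) :
    (∀ j : Fin n, π * ((n : ℝ) - j.val) / km ≤ ξ j ∧ ξ j ≤ π * ((n : ℝ) - j.val) / kp) ∧
    (∀ j j' : Fin n, j < j' →
      π * ((j'.val : ℝ) - j.val) / km ≤ ξ j - ξ j' ∧
      ξ j - ξ j' ≤ π * ((j'.val : ℝ) - j.val) / kp) := by
  set t : Fin 4 → ℝ := ![a, b, c, d]
  have ht : ∀ i, |t i| < 1 := fun i => by fin_cases i <;> assumption
  obtain rfl : A = askeyWilsonWeight t q := funext fun x => by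
    simp [hA, askeyWilsonWeight, t, Fin.prod_univ_four]
  have hkp' : kp = kPlus n q t := by
    simp only [hkp, kPlus, ratioAbs, t, Fin.sum_univ_four, Matrix.cons_val_zero,
      Matrix.cons_val_one, Matrix.cons_val]
    ring
  have hkm' : km = kMinus n q t := by
    simp only [hkm, kMinus, ratioAbs, t, Fin.sum_univ_four, inv_div, Matrix.cons_val_zero,
      Matrix.cons_val_one, Matrix.cons_val]
    ring
  have hG := phaseSum_erase_eq_mul_pi ht rfl hq hq0 hpos hlt (fun j j' h => hdec j j' h) hp
    (E := En) fun x hx => by simpa only [shift, Complex.ofReal_neg, mul_neg, neg_neg] using heq x hx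
  subst hkp' hkm'
  refine ⟨fun j => ?_, fun j j' h => ?_⟩
  · simpa only [hG, mul_comm π] using div_le_and_le_div (kPlus_pos ht hq j.pos)
      (kMinus_pos ht hq j.pos) (phaseSum_erase_bounds ht hq (hpos j).le)
  · have := div_le_and_le_div (kPlus_pos ht hq j.pos) (kMinus_pos ht hq j.pos)
      (phaseSum_erase_sub_bounds ht hq h.ne (hdec j j' h).le)
    rwa [hG, hG, show ((n : ℝ) - j) * π - (n - j') * π = π * (j' - j) by ring] at this
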